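/- arXiv:2403.02976 — 3 statements merged into one kernel-verified Lean document; each statement's English description precedes it below -/
import Mathlib

section
/- Let N ≥ 3 be an integer and x ∈ ℍ. Then the sum over coprime pairs (c,d) ∈ ℤ² with d even of |c·x + d|^{−N} equals (1/(2^N − 1)) · ( S_N(x/2) − S_N(x) ), where S_N(y) denotes the sum over all coprime pairs (c,d) ∈ ℤ² of |c·y + d|^{−N}. -/
noncomputable def fpow (N : ℕ) (x : ℂ) (p : ℤ × ℤ) : ℝ :=
  (‖(p.1 : ℂ) * x + (p.2 : ℂ)‖ ^ N)⁻¹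

lemma summable_fpow (N : ℕ) (hN : 3 ≤ N) (x : ℂ) (hx : 0 < x.im) :
    Summable (fpow N x) := by
  have h := EisensteinSeries.summable_norm_eisSummand (k := (N : ℤ)) (by exact_mod_cast hN)
    (⟨x, hx⟩ : UpperHalfPlane)
  have h2 := ((finTwoArrowEquiv ℤ).symm.summable_iff).mpr h
  refine h2.congr fun p => ?_
  simp only [Function.comp, finTwoArrowEquiv_symm_apply, EisensteinSeries.eisSummand,
    Matrix.cons_val_zero, Matrix.cons_val_one, Matrix.head_cons,
    zpow_neg, zpow_natCast, fpow, norm_inv, norm_pow]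

lemma gcd_odd_of_even_right {c d : ℤ} (h : Int.gcd c d = 1) (hd : Even d) : Odd c := by
  rcases Int.even_or_odd c with hc | hc
  · exfalso
    have h2 : (2 : ℤ) ∣ (Int.gcd c d : ℤ) :=
      Int.dvd_coe_gcd hc.two_dvd hd.two_dvd
    rw [h] at h2
    norm_num at h2
  · exact hc

lemma gcd_two_mul_right {c d : ℤ} (hc : Odd c) (h : Int.gcd c d = 1) :
    Int.gcd c (2 * d) = 1 := by
  rw [← Int.isCoprime_iff_gcd_eq_one] at h ⊢
  refine IsCoprime.mul_right ?_ h
  rw [Int.isCoprime_iff_gcd_eq_one]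
  rcases hc with ⟨k, rfl⟩
  simp [Int.gcd]

lemma gcd_of_gcd_two_mul_right {c d : ℤ} (h : Int.gcd c (2 * d) = 1) : Int.gcd c d = 1 := by
  rw [← Int.isCoprime_iff_gcd_eq_one] at h ⊢
  exact h.of_mul_right_right

lemma fpow_half (N : ℕ) (x : ℂ) (p : ℤ × ℤ) :
    fpow N (x / 2) p = 2 ^ N * fpow N x (p.1, 2 * p.2) := by
  have key : (p.1 : ℂ) * (x / 2) + (p.2 : ℂ) = ((p.1 : ℂ) * x + ((2 * p.2 : ℤ) : ℂ)) / 2 := by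
    push_cast; ring
  rw [show fpow N (x/2) p = (‖(p.1:ℂ) * (x/2) + (p.2:ℂ)‖ ^ N)⁻¹ from rfl, key]
  simp only [fpow, norm_div, Complex.norm_two, div_pow, inv_div]
  rw [div_eq_mul_inv]

lemma fpow_two_mul_fst (N : ℕ) (x : ℂ) (c d : ℤ) :
    fpow N x (2 * c, 2 * d) = (2 ^ N)⁻¹ * fpow N x (c, d) := by
  have key : ((2 * c : ℤ) : ℂ) * x + ((2 * d : ℤ) : ℂ) = 2 * ((c : ℂ) * x + (d : ℂ)) := by
    push_cast; ring
  simp only [fpow, key, norm_mul, Complex.norm_two, mul_pow, mul_inv]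

/-- `S_N(y)`: the sum over coprime pairs `(c,d) ∈ ℤ²` of `|c·y + d|^{-N}`. -/
noncomputable def coprimeSum (N : ℕ) (y : ℂ) : ℝ :=
  ∑' p : {p : ℤ × ℤ // Int.gcd p.1 p.2 = 1},
    (‖(p.1.1 : ℂ) * y + (p.1.2 : ℂ)‖ ^ N)⁻¹

/-- First identity of eq. (C.1): the sum over coprime pairs `(c,d)` with `d` even of
`|c·x + d|^{-N}` equals `(1/(2^N - 1)) (S_N(x/2) - S_N(x))`. -/
theorem coprimeSum_even_d (N : ℕ) (hN : 3 ≤ N) (x : ℂ) (hx : 0 < x.im) :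
    (∑' p : {p : ℤ × ℤ // Int.gcd p.1 p.2 = 1 ∧ Even p.2},
        (‖(p.1.1 : ℂ) * x + (p.1.2 : ℂ)‖ ^ N)⁻¹)
      = (1 / (2 ^ N - 1)) * (coprimeSum N (x / 2) - coprimeSum N x) := by
  classical
  set C : Set (ℤ × ℤ) := {p | Int.gcd p.1 p.2 = 1} with hC
  set CE : Set (ℤ × ℤ) := {p | Int.gcd p.1 p.2 = 1 ∧ Even p.2} with hCE
  set CO : Set (ℤ × ℤ) := {p | Int.gcd p.1 p.2 = 1 ∧ Odd p.2} with hCO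
  set C1 : Set (ℤ × ℤ) := {p | Int.gcd p.1 p.2 = 1 ∧ Odd p.1} with hC1
  set C2 : Set (ℤ × ℤ) := {p | Int.gcd p.1 p.2 = 1 ∧ Even p.1} with hC2
  set f : ℤ × ℤ → ℝ := fpow N x with hf
  set g : ℤ × ℤ → ℝ := fun p => fpow N x (p.1, 2 * p.2) with hg
  have hfs : Summable f := summable_fpow N hN x hx
  have hx2 : 0 < (x / 2).im := by
    have : (x / 2).im = x.im / 2 := by
      simp [Complex.div_im, Complex.normSq]
    rw [this]; linarith
  have hfs' : Summable (fpow N (x / 2)) := summable_fpow N hN (x / 2) hx2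
  have hgs : Summable g := by
    refine (hfs'.mul_left ((2 : ℝ) ^ N)⁻¹).congr fun p => ?_
    rw [fpow_half, inv_mul_cancel_left₀ (by positivity)]
  -- splitting C by parity of second coordinate
  have hCun : C = CE ∪ CO := by
    ext p; simp only [hC, hCE, hCO, Set.mem_setOf_eq, Set.mem_union]
    constructor
    · intro h; rcases Int.even_or_odd p.2 with h2 | h2
      · exact Or.inl ⟨h, h2⟩
      · exact Or.inr ⟨h, h2⟩
    · rintro (⟨h, _⟩ | ⟨h, _⟩) <;> exact h
  have hCdisj : Disjoint CE CO :=
    Set.disjoint_left.mpr fun p h1 h2 => ((Int.not_odd_iff_even.mpr · ) h1.2) h2.2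
  have hCun' : C = C1 ∪ C2 := by
    ext p; simp only [hC, hC1, hC2, Set.mem_setOf_eq, Set.mem_union]
    constructor
    · intro h; rcases Int.even_or_odd p.1 with h2 | h2
      · exact Or.inr ⟨h, h2⟩
      · exact Or.inl ⟨h, h2⟩
    · rintro (⟨h, _⟩ | ⟨h, _⟩) <;> exact h
  have hCdisj' : Disjoint C1 C2 :=
    Set.disjoint_left.mpr fun p h1 h2 => ((Int.not_odd_iff_even.mpr · ) h2.2) h1.2
  set A : ℝ := ∑' p : ↥CE, f ↑p with hA
  set B : ℝ := ∑' p : ↥CO, f ↑p with hB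
  -- step 1 : S = A + B
  have step1 : coprimeSum N x = A + B := by
    have : coprimeSum N x = ∑' p : ↥C, f ↑p := rfl
    rw [this, hCun]
    exact Summable.tsum_union_disjoint hCdisj (hfs.subtype CE) (hfs.subtype CO)
  -- equiv 1 : C1 ≃ CE via (c,d) ↦ (c, 2d)
  obtain ⟨e1, he1⟩ : ∃ e : ↥C1 ≃ ↥CE, ∀ q : ↥C1, (e q : ℤ × ℤ) = (q.1.1, 2 * q.1.2) := by
    refine ⟨Equiv.ofBijective
      (fun q => ⟨(q.1.1, 2 * q.1.2), ⟨gcd_two_mul_right q.2.2 q.2.1, even_two_mul _⟩⟩) ⟨?_, ?_⟩,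
      fun q => rfl⟩
    · intro a b h
      simp only [Subtype.mk.injEq, Prod.mk.injEq] at h
      exact Subtype.ext (Prod.ext h.1 (by omega))
    · rintro ⟨⟨c, e⟩, hgcd, he⟩
      obtain ⟨k, hk⟩ := he
      have he2 : e = 2 * k := by omega
      refine ⟨⟨(c, k), ?_, ?_⟩, ?_⟩
      · exact gcd_of_gcd_two_mul_right (by rw [← he2]; exact hgcd)
      · exact gcd_odd_of_even_right hgcd ⟨k, hk⟩
      · exact Subtype.ext (Prod.ext rfl he2.symm)
  -- equiv 2 : CO ≃ C2 via (c,d) ↦ (2c, d)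
  obtain ⟨e2, he2⟩ : ∃ e : ↥CO ≃ ↥C2, ∀ q : ↥CO, (e q : ℤ × ℤ) = (2 * q.1.1, q.1.2) := by
    refine ⟨Equiv.ofBijective
      (fun q => ⟨(2 * q.1.1, q.1.2),
        ⟨by rw [Int.gcd_comm]; exact gcd_two_mul_right q.2.2 (by rw [Int.gcd_comm]; exact q.2.1),
         even_two_mul _⟩⟩) ⟨?_, ?_⟩,
      fun q => rfl⟩
    · intro a b h
      simp only [Subtype.mk.injEq, Prod.mk.injEq] at h
      exact Subtype.ext (Prod.ext (by omega) h.2)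
    · rintro ⟨⟨a, d⟩, hgcd, ha⟩
      obtain ⟨k, hk⟩ := ha
      have ha2 : a = 2 * k := by omega
      have hgcd' : Int.gcd d (2 * k) = 1 := by
        rw [Int.gcd_comm, ← ha2]; exact hgcd
      refine ⟨⟨(k, d), ?_, ?_⟩, ?_⟩
      · rw [Int.gcd_comm]; exact gcd_of_gcd_two_mul_right hgcd'
      · exact gcd_odd_of_even_right (by rw [Int.gcd_comm]; exact hgcd) ⟨k, hk⟩
      · exact Subtype.ext (Prod.ext ha2.symm rfl)
  -- step 4 : sum of g over C1 equals A
  have step4 : (∑' p : ↥C1, g ↑p) = A := by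
    rw [hA, ← e1.tsum_eq (fun p : ↥CE => f ↑p)]
    refine tsum_congr fun q => ?_
    rw [he1 q]
  -- step 5 : sum of g over C2 equals (2^N)⁻¹ * B
  have step5 : (∑' p : ↥C2, g ↑p) = (2 ^ N)⁻¹ * B := by
    rw [← e2.tsum_eq (fun p : ↥C2 => g ↑p)]
    have : ∀ q : ↥CO, g (e2 q : ℤ × ℤ) = (2 ^ N)⁻¹ * f ↑q := by
      intro q
      rw [hg]
      simp only [he2 q]
      exact fpow_two_mul_fst N x q.1.1 q.1.2
    rw [tsum_congr this, tsum_mul_left]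
  -- step 3 : sum of g over C splits
  have step3 : (∑' p : ↥C, g ↑p) = A + (2 ^ N)⁻¹ * B := by
    rw [hCun', Summable.tsum_union_disjoint hCdisj' (hgs.subtype C1) (hgs.subtype C2), step4, step5]
  -- step 2 : S' = 2^N * (sum of g over C)
  have step2 : coprimeSum N (x / 2) = 2 ^ N * (A + (2 ^ N)⁻¹ * B) := by
    have h0 : coprimeSum N (x / 2) = ∑' p : ↥C, fpow N (x / 2) ↑p := rfl
    rw [h0, tsum_congr (fun p : ↥C => fpow_half N x ↑p), tsum_mul_left, step3]
  -- finish
  have hgoal : (∑' p : {p : ℤ × ℤ // Int.gcd p.1 p.2 = 1 ∧ Even p.2},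
      (‖(p.1.1 : ℂ) * x + (p.1.2 : ℂ)‖ ^ N)⁻¹) = A := rfl
  rw [hgoal, step2, step1]
  have h1 : (1 : ℝ) < 2 ^ N := by
    apply one_lt_pow₀ (by norm_num) (by omega)
  have h2 : (2 : ℝ) ^ N - 1 ≠ 0 := by linarith
  field_simp
  ring
end

section
/- Let N ≥ 3 be an integer and x ∈ ℍ. Then the sum over coprime pairs (c,d) ∈ ℤ² with d even of (−1)^{d/2} · |c·x + d|^{−N} equals (1/(2^N − 1)) · ( 2^{1−N} · S_N(x/4) − (2^N + 2)·2^{−N} · S_N(x/2) + S_N(x) ), where S_N(y) denotes the sum over all coprime pairs (c,d) ∈ ℤ² of |c·y + d|^{−N}. -/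
open Complex Set

namespace CSAux

noncomputable def latF (N : ℕ) (τ : ℂ) (p : ℤ × ℤ) : ℝ :=
  (‖(p.1 : ℂ) * τ + (p.2 : ℂ)‖ ^ N)⁻¹

lemma summable_latF (N : ℕ) (hN : 3 ≤ N) {τ : ℂ} (hτ : 0 < τ.im) :
    Summable (latF N τ) := by
  have hk : (2 : ℝ) < (N : ℝ) := by exact_mod_cast lt_of_lt_of_le (by norm_num) hN
  let z : UpperHalfPlane := ⟨τ, hτ⟩
  have h1 := EisensteinSeries.summable_one_div_norm_rpow hk
  have h2 : Summable fun x : Fin 2 → ℤ =>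
      ‖(x 0 : ℂ) * τ + (x 1 : ℂ)‖ ^ (-(N : ℝ)) := by
    apply ((h1.mul_left ((EisensteinSeries.r z) ^ (-(N : ℝ)))).of_nonneg_of_le
      (fun x => Real.rpow_nonneg (norm_nonneg _) _))
    intro x
    exact EisensteinSeries.summand_bound z (by positivity) x
  have h3 := h2.comp_injective (finTwoArrowEquiv ℤ).symm.injective
  refine h3.congr fun p => ?_
  simp only [Function.comp, finTwoArrowEquiv_symm_apply, Matrix.cons_val_zero,
    Matrix.cons_val_one, Matrix.head_cons, latF]
  rw [Real.rpow_neg (norm_nonneg _), Real.rpow_natCast]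

-- parity / gcd helpers
lemma gcd_two_mul_right_iff {c d : ℤ} :
    Int.gcd c (2 * d) = 1 ↔ Odd c ∧ Int.gcd c d = 1 := by
  unfold Int.gcd
  rw [Int.natAbs_mul]
  show Nat.Coprime _ _ ↔ _
  rw [show (2 : ℤ).natAbs = 2 from rfl, Nat.coprime_mul_iff_right,
    Nat.coprime_two_right, Int.natAbs_odd]


lemma gcd_two_mul_left_iff {c d : ℤ} :
    Int.gcd (2 * c) d = 1 ↔ Odd d ∧ Int.gcd c d = 1 := by
  rw [Int.gcd_comm, gcd_two_mul_right_iff, Int.gcd_comm]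

lemma odd_left_of_gcd {c d : ℤ} (h : Int.gcd c d = 1) (hd : Even d) : Odd c := by
  rw [← Int.not_even_iff_odd]
  intro hc
  have h2 : (2 : ℤ) ∣ (Int.gcd c d : ℤ) :=
    Int.dvd_coe_gcd hc.two_dvd hd.two_dvd
  rw [h] at h2
  norm_num at h2

lemma odd_right_of_gcd {c d : ℤ} (h : Int.gcd c d = 1) (hc : Even c) : Odd d :=
  odd_left_of_gcd (by rwa [Int.gcd_comm]) hc

-- scaling lemmas
lemma latF_two_mul_right (N : ℕ) (τ : ℂ) (c d : ℤ) :
    latF N τ (c, 2 * d) = ((2 : ℝ) ^ N)⁻¹ * latF N (τ / 2) (c, d) := by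
  unfold latF
  have h : ((c : ℂ) * τ + ((2 * d : ℤ) : ℂ)) = 2 * ((c : ℂ) * (τ / 2) + (d : ℂ)) := by
    push_cast; ring
  simp only [h, norm_mul, Complex.norm_two, mul_pow, mul_inv]

lemma latF_two_mul_left (N : ℕ) (τ : ℂ) (c d : ℤ) :
    latF N τ (2 * c, d) = latF N (2 * τ) (c, d) := by
  unfold latF
  have h : (((2 * c : ℤ) : ℂ) * τ + (d : ℂ)) = ((c : ℂ) * (2 * τ) + (d : ℂ)) := by
    push_cast; ring
  rw [h]

-- index sets
def SCop : Set (ℤ × ℤ) := {p | Int.gcd p.1 p.2 = 1}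
def SA : Set (ℤ × ℤ) := {p | Int.gcd p.1 p.2 = 1 ∧ Odd p.1 ∧ Odd p.2}
def SB : Set (ℤ × ℤ) := {p | Int.gcd p.1 p.2 = 1 ∧ Even p.2}
def SC : Set (ℤ × ℤ) := {p | Int.gcd p.1 p.2 = 1 ∧ Even p.1 ∧ Odd p.2}
def SOc : Set (ℤ × ℤ) := {p | Int.gcd p.1 p.2 = 1 ∧ Odd p.1}
def SOd : Set (ℤ × ℤ) := {p | Int.gcd p.1 p.2 = 1 ∧ Odd p.2}

noncomputable def T (N : ℕ) (s : Set (ℤ × ℤ)) (τ : ℂ) : ℝ :=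
  ∑' p, s.indicator (latF N τ) p

-- injections
lemma inj2r : Function.Injective (fun q : ℤ × ℤ => (q.1, 2 * q.2)) := by
  intro a b h
  simp only [Prod.mk.injEq] at h
  exact Prod.ext h.1 (by omega)

lemma inj2l : Function.Injective (fun q : ℤ × ℤ => (2 * q.1, q.2)) := by
  intro a b h
  simp only [Prod.mk.injEq] at h
  exact Prod.ext (by omega) h.2


lemma no_par {n : ℤ} (h : Odd n) (h' : Even n) : False :=
  (Int.not_even_iff_odd.mpr h) h'

lemma indicator_cop_split (f : ℤ × ℤ → ℝ) (p : ℤ × ℤ) :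
    SCop.indicator f p = SA.indicator f p + SB.indicator f p + SC.indicator f p := by
  by_cases hg : Int.gcd p.1 p.2 = 1
  · have hS : p ∈ SCop := hg
    rcases Int.even_or_odd p.2 with h2 | h2
    · have hA : p ∉ SA := fun h => no_par h.2.2 h2
      have hC : p ∉ SC := fun h => no_par h.2.2 h2
      have hB : p ∈ SB := ⟨hg, h2⟩
      rw [indicator_of_mem hS, indicator_of_mem hB, indicator_of_notMem hA,
        indicator_of_notMem hC]; ring
    · have hB : p ∉ SB := fun h => no_par h2 h.2
      rcases Int.even_or_odd p.1 with h1 | h1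
      · have hA : p ∉ SA := fun h => no_par h.2.1 h1
        have hC : p ∈ SC := ⟨hg, h1, h2⟩
        rw [indicator_of_mem hS, indicator_of_mem hC, indicator_of_notMem hA,
          indicator_of_notMem hB]; ring
      · have hA : p ∈ SA := ⟨hg, h1, h2⟩
        have hC : p ∉ SC := fun h => no_par h1 h.2.1
        rw [indicator_of_mem hS, indicator_of_mem hA, indicator_of_notMem hC,
          indicator_of_notMem hB]; ring
  · have hS : p ∉ SCop := hg
    have hA : p ∉ SA := fun h => hg h.1
    have hB : p ∉ SB := fun h => hg h.1
    have hC : p ∉ SC := fun h => hg h.1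
    rw [indicator_of_notMem hS, indicator_of_notMem hA, indicator_of_notMem hB,
      indicator_of_notMem hC]; ring

lemma indicator_oc_split (f : ℤ × ℤ → ℝ) (p : ℤ × ℤ) :
    SOc.indicator f p = SA.indicator f p + SB.indicator f p := by
  by_cases hg : Int.gcd p.1 p.2 = 1
  · rcases Int.even_or_odd p.2 with h2 | h2
    · have hA : p ∉ SA := fun h => no_par h.2.2 h2
      have hB : p ∈ SB := ⟨hg, h2⟩
      have hO : p ∈ SOc := ⟨hg, odd_left_of_gcd hg h2⟩
      rw [indicator_of_mem hO, indicator_of_mem hB, indicator_of_notMem hA]; ring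
    · have hB : p ∉ SB := fun h => no_par h2 h.2
      rcases Int.even_or_odd p.1 with h1 | h1
      · have hA : p ∉ SA := fun h => no_par h.2.1 h1
        have hO : p ∉ SOc := fun h => no_par h.2 h1
        rw [indicator_of_notMem hO, indicator_of_notMem hA, indicator_of_notMem hB]; ring
      · have hA : p ∈ SA := ⟨hg, h1, h2⟩
        have hO : p ∈ SOc := ⟨hg, h1⟩
        rw [indicator_of_mem hO, indicator_of_mem hA, indicator_of_notMem hB]; ring
  · have hA : p ∉ SA := fun h => hg h.1
    have hB : p ∉ SB := fun h => hg h.1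
    have hO : p ∉ SOc := fun h => hg h.1
    rw [indicator_of_notMem hO, indicator_of_notMem hA, indicator_of_notMem hB]; ring

lemma indicator_od_split (f : ℤ × ℤ → ℝ) (p : ℤ × ℤ) :
    SOd.indicator f p = SA.indicator f p + SC.indicator f p := by
  by_cases hg : Int.gcd p.1 p.2 = 1
  · rcases Int.even_or_odd p.1 with h1 | h1
    · have hA : p ∉ SA := fun h => no_par h.2.1 h1
      rcases Int.even_or_odd p.2 with h2 | h2
      · have hC : p ∉ SC := fun h => no_par h.2.2 h2
        have hO : p ∉ SOd := fun h => no_par h.2 h2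
        rw [indicator_of_notMem hO, indicator_of_notMem hA, indicator_of_notMem hC]; ring
      · have hC : p ∈ SC := ⟨hg, h1, h2⟩
        have hO : p ∈ SOd := ⟨hg, h2⟩
        rw [indicator_of_mem hO, indicator_of_mem hC, indicator_of_notMem hA]; ring
    · have hC : p ∉ SC := fun h => no_par h1 h.2.1
      rcases Int.even_or_odd p.2 with h2 | h2
      · have hA : p ∉ SA := fun h => no_par h.2.2 h2
        have hO : p ∉ SOd := fun h => no_par h.2 h2
        rw [indicator_of_notMem hO, indicator_of_notMem hA, indicator_of_notMem hC]; ring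
      · have hA : p ∈ SA := ⟨hg, h1, h2⟩
        have hO : p ∈ SOd := ⟨hg, h2⟩
        rw [indicator_of_mem hO, indicator_of_mem hA, indicator_of_notMem hC]; ring
  · have hA : p ∉ SA := fun h => hg h.1
    have hC : p ∉ SC := fun h => hg h.1
    have hO : p ∉ SOd := fun h => hg h.1
    rw [indicator_of_notMem hO, indicator_of_notMem hA, indicator_of_notMem hC]; ring


lemma T_cop (N : ℕ) (hN : 3 ≤ N) {τ : ℂ} (hτ : 0 < τ.im) :
    T N SCop τ = T N SA τ + T N SB τ + T N SC τ := by
  have hs := summable_latF N hN hτ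
  unfold T
  rw [tsum_congr (indicator_cop_split (latF N τ)),
    Summable.tsum_add ((hs.indicator SA).add (hs.indicator SB)) (hs.indicator SC),
    Summable.tsum_add (hs.indicator SA) (hs.indicator SB)]

lemma T_oc (N : ℕ) (hN : 3 ≤ N) {τ : ℂ} (hτ : 0 < τ.im) :
    T N SOc τ = T N SA τ + T N SB τ := by
  have hs := summable_latF N hN hτ
  unfold T
  rw [tsum_congr (indicator_oc_split (latF N τ)),
    Summable.tsum_add (hs.indicator SA) (hs.indicator SB)]

lemma T_od (N : ℕ) (hN : 3 ≤ N) {τ : ℂ} (hτ : 0 < τ.im) :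
    T N SOd τ = T N SA τ + T N SC τ := by
  have hs := summable_latF N hN hτ
  unfold T
  rw [tsum_congr (indicator_od_split (latF N τ)),
    Summable.tsum_add (hs.indicator SA) (hs.indicator SC)]

lemma supp_SB (N : ℕ) (τ : ℂ) :
    Function.support (SB.indicator (latF N τ)) ⊆
      Set.range (fun q : ℤ × ℤ => (q.1, 2 * q.2)) := by
  intro p hp
  have hmem : p ∈ SB := by
    by_contra h
    exact hp (indicator_of_notMem h _)
  obtain ⟨e, he⟩ := hmem.2
  exact ⟨(p.1, e), Prod.ext rfl (by dsimp; omega)⟩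

lemma supp_SC (N : ℕ) (τ : ℂ) :
    Function.support (SC.indicator (latF N τ)) ⊆
      Set.range (fun q : ℤ × ℤ => (2 * q.1, q.2)) := by
  intro p hp
  have hmem : p ∈ SC := by
    by_contra h
    exact hp (indicator_of_notMem h _)
  obtain ⟨e, he⟩ := hmem.2.1
  exact ⟨(e, p.2), Prod.ext (by dsimp; omega) rfl⟩

lemma T_B (N : ℕ) (τ : ℂ) :
    T N SB τ = ((2 : ℝ) ^ N)⁻¹ * T N SOc (τ / 2) := by
  unfold T
  rw [← Function.Injective.tsum_eq inj2r (supp_SB N τ), ← tsum_mul_left]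
  refine tsum_congr fun q => ?_
  by_cases hq : q ∈ SOc
  · have hmem : ((q.1, 2 * q.2) : ℤ × ℤ) ∈ SB :=
      ⟨gcd_two_mul_right_iff.mpr ⟨hq.2, hq.1⟩, ⟨q.2, by ring⟩⟩
    rw [indicator_of_mem hmem, indicator_of_mem hq]
    exact latF_two_mul_right N τ q.1 q.2
  · have hmem : ((q.1, 2 * q.2) : ℤ × ℤ) ∉ SB := fun h =>
      hq ⟨(gcd_two_mul_right_iff.mp h.1).2, (gcd_two_mul_right_iff.mp h.1).1⟩
    rw [indicator_of_notMem hmem, indicator_of_notMem hq, mul_zero]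

lemma T_C (N : ℕ) (τ : ℂ) :
    T N SC τ = T N SOd (2 * τ) := by
  unfold T
  rw [← Function.Injective.tsum_eq inj2l (supp_SC N τ)]
  refine tsum_congr fun q => ?_
  by_cases hq : q ∈ SOd
  · have hmem : ((2 * q.1, q.2) : ℤ × ℤ) ∈ SC :=
      ⟨gcd_two_mul_left_iff.mpr ⟨hq.2, hq.1⟩, ⟨q.1, by ring⟩, hq.2⟩
    rw [indicator_of_mem hmem, indicator_of_mem hq]
    exact latF_two_mul_left N τ q.1 q.2
  · have hmem : ((2 * q.1, q.2) : ℤ × ℤ) ∉ SC := fun h =>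
      hq ⟨(gcd_two_mul_left_iff.mp h.1).2, (gcd_two_mul_left_iff.mp h.1).1⟩
    rw [indicator_of_notMem hmem, indicator_of_notMem hq]


def Sh1 : Set (ℤ × ℤ) := {q | Int.gcd q.1 q.2 = 1 ∧ Odd q.1 ∧ Even q.2}

lemma supp_even_snd (s : Set (ℤ × ℤ)) (hs : ∀ p ∈ s, Even p.2) (f : ℤ × ℤ → ℝ) :
    Function.support (s.indicator f) ⊆ Set.range (fun q : ℤ × ℤ => (q.1, 2 * q.2)) := by
  intro p hp
  have hmem : p ∈ s := by
    by_contra h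
    exact hp (indicator_of_notMem h _)
  obtain ⟨e, he⟩ := hs p hmem
  exact ⟨(p.1, e), Prod.ext rfl (by dsimp; omega)⟩

lemma signed_sum (N : ℕ) (hN : 3 ≤ N) {x : ℂ} (hx : 0 < x.im) :
    (∑' p : {p : ℤ × ℤ // Int.gcd p.1 p.2 = 1 ∧ Even p.2},
        ((-1 : ℝ) ^ (p.1.2 / 2)) * latF N x p.1)
    = ((2 : ℝ) ^ N)⁻¹ * (((2 : ℝ) ^ N)⁻¹ * T N SOc (x / 2 / 2))
        - ((2 : ℝ) ^ N)⁻¹ * T N SA (x / 2) := by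
  have hsx := summable_latF N hN hx
  set g : ℤ × ℤ → ℝ := fun p => ((-1 : ℝ) ^ (p.2 / 2)) * latF N x p with hg
  have hcomp : Summable (fun q : ℤ × ℤ => latF N x (q.1, 2 * q.2)) :=
    hsx.comp_injective inj2r
  have hLHS : (∑' p : {p : ℤ × ℤ // Int.gcd p.1 p.2 = 1 ∧ Even p.2},
      ((-1 : ℝ) ^ (p.1.2 / 2)) * latF N x p.1) = ∑' p, SB.indicator g p :=
    tsum_subtype SB g
  rw [hLHS, ← Function.Injective.tsum_eq inj2r (supp_even_snd SB (fun p hp => hp.2) g)]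
  have key : ∀ q : ℤ × ℤ, SB.indicator g (q.1, 2 * q.2)
      = Sh1.indicator (fun q => latF N x (q.1, 2 * q.2)) q
        + SA.indicator (fun q => -(latF N x (q.1, 2 * q.2))) q := by
    intro q
    by_cases hgc : Int.gcd q.1 (2 * q.2) = 1
    · have hodd : Odd q.1 := (gcd_two_mul_right_iff.mp hgc).1
      have hgcd : Int.gcd q.1 q.2 = 1 := (gcd_two_mul_right_iff.mp hgc).2
      have hmem : ((q.1, 2 * q.2) : ℤ × ℤ) ∈ SB := ⟨hgc, ⟨q.2, by ring⟩⟩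
      rw [indicator_of_mem hmem]
      have hdiv : (2 * q.2) / 2 = q.2 := by omega
      show ((-1 : ℝ) ^ ((2 * q.2) / 2)) * latF N x (q.1, 2 * q.2) = _
      rw [hdiv]
      rcases Int.even_or_odd q.2 with h2 | h2
      · rw [Even.neg_one_zpow h2, one_mul,
          indicator_of_mem (show q ∈ Sh1 from ⟨hgcd, hodd, h2⟩),
          indicator_of_notMem (show q ∉ SA from fun h => no_par h.2.2 h2), add_zero]
      · rw [Odd.neg_one_zpow h2,
          indicator_of_notMem (show q ∉ Sh1 from fun h => no_par h2 h.2.2),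
          indicator_of_mem (show q ∈ SA from ⟨hgcd, hodd, h2⟩), zero_add]
        ring
    · have h1 : ((q.1, 2 * q.2) : ℤ × ℤ) ∉ SB := fun h => hgc h.1
      have h2 : q ∉ Sh1 := fun h =>
        hgc (gcd_two_mul_right_iff.mpr ⟨h.2.1, h.1⟩)
      have h3 : q ∉ SA := fun h =>
        hgc (gcd_two_mul_right_iff.mpr ⟨h.2.1, h.1⟩)
      rw [indicator_of_notMem h1, indicator_of_notMem h2, indicator_of_notMem h3,
        add_zero]
  have hs1 : Summable (Sh1.indicator (fun q : ℤ × ℤ => latF N x (q.1, 2 * q.2))) :=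
    hcomp.indicator _
  have hnegeq : SA.indicator (fun q : ℤ × ℤ => -(latF N x (q.1, 2 * q.2)))
      = fun q => -(SA.indicator (fun q : ℤ × ℤ => latF N x (q.1, 2 * q.2)) q) := by
    funext q
    by_cases h : q ∈ SA <;> simp [h]
  have hs2 : Summable (SA.indicator (fun q : ℤ × ℤ => -(latF N x (q.1, 2 * q.2)))) := by
    rw [hnegeq]; exact (hcomp.indicator _).neg
  rw [tsum_congr key, Summable.tsum_add hs1 hs2]
  -- second piece
  have hpiece2 : (∑' q, SA.indicator (fun q : ℤ × ℤ => -(latF N x (q.1, 2 * q.2))) q)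
      = -(((2 : ℝ) ^ N)⁻¹ * T N SA (x / 2)) := by
    rw [hnegeq, tsum_neg]
    congr 1
    rw [T, ← tsum_mul_left]
    refine tsum_congr fun q => ?_
    by_cases h : q ∈ SA
    · rw [indicator_of_mem h, indicator_of_mem h]
      exact latF_two_mul_right N x q.1 q.2
    · rw [indicator_of_notMem h, indicator_of_notMem h, mul_zero]
  -- first piece: reindex again
  have hpiece1 : (∑' q, Sh1.indicator (fun q : ℤ × ℤ => latF N x (q.1, 2 * q.2)) q)
      = ((2 : ℝ) ^ N)⁻¹ * (((2 : ℝ) ^ N)⁻¹ * T N SOc (x / 2 / 2)) := by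
    rw [← Function.Injective.tsum_eq inj2r
      (supp_even_snd Sh1 (fun p hp => hp.2.2) _)]
    rw [T, ← tsum_mul_left, ← tsum_mul_left]
    refine tsum_congr fun r => ?_
    by_cases h : r ∈ SOc
    · have hmem : ((r.1, 2 * r.2) : ℤ × ℤ) ∈ Sh1 :=
        ⟨gcd_two_mul_right_iff.mpr ⟨h.2, h.1⟩, h.2, ⟨r.2, by ring⟩⟩
      rw [indicator_of_mem hmem, indicator_of_mem h]
      show latF N x (r.1, 2 * (2 * r.2)) = _
      rw [latF_two_mul_right N x r.1 (2 * r.2), latF_two_mul_right N (x / 2) r.1 r.2]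
    · have hmem : ((r.1, 2 * r.2) : ℤ × ℤ) ∉ Sh1 := fun hm =>
        h ⟨(gcd_two_mul_right_iff.mp hm.1).2, (gcd_two_mul_right_iff.mp hm.1).1⟩
      rw [indicator_of_notMem hmem, indicator_of_notMem h, mul_zero, mul_zero]
  rw [hpiece1, hpiece2]
  ring


lemma final_algebra (r a1 b1 c1 a2 b2 c2 a3 b3 c3 : ℝ) (hr0 : r ≠ 0) (hr1 : r - 1 ≠ 0)
    (eB2 : b2 = r⁻¹ * (a1 + b1)) (eB3 : b3 = r⁻¹ * (a2 + b2))
    (eC1 : c1 = a2 + c2) (eC2 : c2 = a3 + c3) :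
    r⁻¹ * (r⁻¹ * (a1 + b1)) - r⁻¹ * a2
      = 1 / (r - 1) * (2 * r⁻¹ * (a1 + b1 + c1) - (r + 2) * r⁻¹ * (a2 + b2 + c2)
          + (a3 + b3 + c3)) := by
  have hG : r * r⁻¹ = 1 := mul_inv_cancel₀ hr0
  have eB2' : r * b2 = a1 + b1 := by rw [eB2, ← mul_assoc, hG, one_mul]
  have eB3' : r * b3 = a2 + b2 := by rw [eB3, ← mul_assoc, hG, one_mul]
  rw [one_div_mul_eq_div, eq_div_iff hr1]
  refine mul_right_cancel₀ (pow_ne_zero 2 hr0) ?_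
  linear_combination (1 + r) * eB2' - r * eB3' - 2 * r * eC1 + r ^ 2 * eC2 +
    (((r * r⁻¹ + 1) * (a1 + b1) - r * a2) * (r - 1) - 2 * r * (a1 + b1 + c1)
      + (r + 2) * r * (a2 + b2 + c2)) * hG


end CSAux

open CSAux

/-- Second identity of eq. (C.1): the sum over coprime pairs `(c,d)` with `d` even of
`(-1)^{d/2} |c·x + d|^{-N}` equals
`(1/(2^N - 1)) (2^{1-N} S_N(x/4) - (2^N + 2) 2^{-N} S_N(x/2) + S_N(x))`. -/
theorem coprimeSum_even_d_signed (N : ℕ) (hN : 3 ≤ N) (x : ℂ) (hx : 0 < x.im) :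
    (∑' p : {p : ℤ × ℤ // Int.gcd p.1 p.2 = 1 ∧ Even p.2},
        ((-1 : ℝ) ^ (p.1.2 / 2)) *
          (‖(p.1.1 : ℂ) * x + (p.1.2 : ℂ)‖ ^ N)⁻¹)
      = (1 / (2 ^ N - 1)) *
          ((2 : ℝ) ^ ((1 : ℤ) - (N : ℤ)) * coprimeSum N (x / 4)
            - ((2 : ℝ) ^ N + 2) * (2 : ℝ) ^ (-(N : ℤ)) * coprimeSum N (x / 2)
            + coprimeSum N x) := by

  have him2 : 0 < (x / 2).im := by
    rw [show ((2 : ℂ)) = ((2 : ℝ) : ℂ) by norm_num, Complex.div_ofReal_im]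
    positivity
  have him4 : 0 < (x / 4).im := by
    rw [show ((4 : ℂ)) = ((4 : ℝ) : ℂ) by norm_num, Complex.div_ofReal_im]
    positivity
  have hquarter : x / 2 / 2 = x / 4 := by rw [div_div]; norm_num
  have hr0 : ((2 : ℝ) ^ N) ≠ 0 := by positivity
  have hr1 : ((2 : ℝ) ^ N) - 1 ≠ 0 := by
    have h8 : (8 : ℝ) ≤ (2 : ℝ) ^ N := by
      calc (8 : ℝ) = 2 ^ 3 := by norm_num
      _ ≤ 2 ^ N := by
        apply pow_le_pow_right₀ (by norm_num) hN
    intro h; nlinarith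
  have hcop : ∀ τ : ℂ, coprimeSum N τ = T N SCop τ := fun τ => tsum_subtype SCop (latF N τ)
  have hz1 : (2 : ℝ) ^ ((1 : ℤ) - (N : ℤ)) = 2 * ((2 : ℝ) ^ N)⁻¹ := by
    rw [zpow_sub₀ (by norm_num : (2 : ℝ) ≠ 0), zpow_one, zpow_natCast, div_eq_mul_inv]
  have hz2 : (2 : ℝ) ^ (-(N : ℤ)) = ((2 : ℝ) ^ N)⁻¹ := by
    rw [zpow_neg, zpow_natCast]
  have e1 : coprimeSum N (x / 4) = T N SA (x / 4) + T N SB (x / 4) + T N SC (x / 4) :=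
    (hcop _).trans (T_cop N hN him4)
  have e2 : coprimeSum N (x / 2) = T N SA (x / 2) + T N SB (x / 2) + T N SC (x / 2) :=
    (hcop _).trans (T_cop N hN him2)
  have e3 : coprimeSum N x = T N SA x + T N SB x + T N SC x :=
    (hcop _).trans (T_cop N hN hx)
  have eB2 : T N SB (x / 2) = ((2 : ℝ) ^ N)⁻¹ * (T N SA (x / 4) + T N SB (x / 4)) := by
    rw [T_B N (x / 2), hquarter, T_oc N hN him4]
  have eB3 : T N SB x = ((2 : ℝ) ^ N)⁻¹ * (T N SA (x / 2) + T N SB (x / 2)) := by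
    rw [T_B N x, T_oc N hN him2]
  have eC1 : T N SC (x / 4) = T N SA (x / 2) + T N SC (x / 2) := by
    rw [T_C N (x / 4), show 2 * (x / 4) = x / 2 by ring, T_od N hN him2]
  have eC2 : T N SC (x / 2) = T N SA x + T N SC x := by
    rw [T_C N (x / 2), show 2 * (x / 2) = x by ring, T_od N hN hx]
  have hLHS := signed_sum N hN hx
  rw [hquarter, T_oc N hN him4] at hLHS
  refine hLHS.trans ?_
  rw [hz1, hz2, e1, e2, e3]
  exact final_algebra ((2 : ℝ) ^ N) _ _ _ _ _ _ _ _ _ hr0 hr1 eB2 eB3 eC1 eC2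
end

section
/- Let s be a real number with s > 1 and τ ∈ ℍ. Then E_s(2τ) + E_s(τ/2) + E_s((τ+1)/2) = ((1 + 2^{2s−1}) / 2^{s−1}) · E_s(τ), where E_s denotes the real analytic Eisenstein series. Equivalently, E_s((τ+1)/2) = ((1+2^{2s−1})/2^{s−1}) E_s(τ) − E_s(2τ) − E_s(τ/2). -/
set_option maxHeartbeats 1600000


/-- The real analytic Eisenstein series
`E_s(τ) = (1/2) Σ_{(c,d)∈ℤ², gcd(c,d)=1} Im(τ)^s / |cτ+d|^{2s}`. -/
noncomputable def realEisenstein (s : ℝ) (τ : ℂ) : ℝ :=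
  (1 / 2) * ∑' p : {p : ℤ × ℤ // Int.gcd p.1 p.2 = 1},
    τ.im ^ s / (‖(p.1.1 : ℂ) * τ + (p.1.2 : ℂ)‖) ^ (2 * s)

namespace RealEisAux


/-- The coprime-pair index type. -/
abbrev CP := {p : ℤ × ℤ // Int.gcd p.1 p.2 = 1}

lemma odd_of_even_right {c d : ℤ} (h : Int.gcd c d = 1) (hd : Even d) : ¬ Even c := by
  rintro ⟨e, rfl⟩
  obtain ⟨f, rfl⟩ := hd
  have h2 : (2 : ℤ) ∣ Int.gcd (e + e) (f + f) := Int.dvd_coe_gcd ⟨e, by ring⟩ ⟨f, by ring⟩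
  rw [h] at h2
  norm_num at h2

lemma cop_half_right {c d : ℤ} (h : Int.gcd c d = 1) (hd : Even d) : Int.gcd c (d / 2) = 1 := by
  obtain ⟨e, rfl⟩ := hd
  have : (e + e) / 2 = e := by omega
  rw [this]
  rw [← Int.isCoprime_iff_gcd_eq_one] at h ⊢
  have : e + e = 2 * e := by ring
  rw [this] at h
  exact h.of_mul_right_right

lemma cop_two_mul_left {c d : ℤ} (h : Int.gcd c d = 1) (hd : ¬ Even d) : Int.gcd (2 * c) d = 1 := by
  rw [← Int.isCoprime_iff_gcd_eq_one] at h ⊢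
  refine IsCoprime.mul_left ?_ h
  rw [Int.isCoprime_iff_gcd_eq_one]
  have hodd : Odd d.natAbs := Int.natAbs_odd.mpr (Int.not_even_iff_odd.mp hd)
  simpa [Int.gcd] using Nat.coprime_two_left.mpr hodd

/-- The parity bijection on coprime pairs. -/
def sig : CP ≃ CP where
  toFun p := if hd : Even p.1.2 then ⟨(p.1.1, p.1.2 / 2), cop_half_right p.2 hd⟩
    else ⟨(2 * p.1.1, p.1.2), cop_two_mul_left p.2 hd⟩
  invFun q := if ha : Even q.1.1 then ⟨(q.1.1 / 2, q.1.2), by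
      rw [Int.gcd_comm]; exact cop_half_right (by rw [Int.gcd_comm]; exact q.2) ha⟩
    else ⟨(q.1.1, 2 * q.1.2), by
      rw [Int.gcd_comm]; exact cop_two_mul_left (by rw [Int.gcd_comm]; exact q.2) ha⟩
  left_inv p := by
    obtain ⟨⟨c, d⟩, hp⟩ := p
    by_cases hd : Even d
    · have hc : ¬ Even c := odd_of_even_right hp hd
      obtain ⟨e, rfl⟩ := hd
      dsimp only
      have he : Even (e + e) := ⟨e, rfl⟩
      rw [dif_pos he, dif_neg hc]
      ext <;> simp <;> omega
    · dsimp only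
      have h2 : Even (2 * c) := ⟨c, by ring⟩
      rw [dif_neg hd, dif_pos h2]
      ext <;> simp <;> omega
  right_inv q := by
    obtain ⟨⟨a, b⟩, hq⟩ := q
    by_cases ha : Even a
    · have hb : ¬ Even b := odd_of_even_right (by rw [Int.gcd_comm]; exact hq) ha
      obtain ⟨e, rfl⟩ := ha
      dsimp only
      have he : Even (e + e) := ⟨e, rfl⟩
      rw [dif_pos he, dif_neg hb]
      ext <;> simp <;> omega
    · dsimp only
      have h2 : Even (2 * b) := ⟨b, by ring⟩
      rw [dif_neg ha, dif_pos h2]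
      ext <;> simp <;> omega

/-- Swap. -/
def swp : CP ≃ CP where
  toFun p := ⟨(p.1.2, p.1.1), by rw [Int.gcd_comm]; exact p.2⟩
  invFun p := ⟨(p.1.2, p.1.1), by rw [Int.gcd_comm]; exact p.2⟩
  left_inv p := rfl
  right_inv p := rfl

/-- Shear. -/
def shr : CP ≃ CP where
  toFun p := ⟨(p.1.1, p.1.1 + p.1.2), by
    rw [← Int.isCoprime_iff_gcd_eq_one] at *
    simpa using (Int.isCoprime_iff_gcd_eq_one.mpr p.2).mul_add_left_right 1⟩
  invFun q := ⟨(q.1.1, q.1.2 - q.1.1), by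
    rw [← Int.isCoprime_iff_gcd_eq_one] at *
    simpa [sub_eq_add_neg] using (Int.isCoprime_iff_gcd_eq_one.mpr q.2).add_mul_left_right (-1)⟩
  left_inv p := by ext <;> simp <;> ring
  right_inv q := by ext <;> simp <;> ring

lemma key (s : ℝ) (τ : ℂ) (k : ℝ) (F : ℤ × ℤ → ℝ)
    (hF : ∀ a b : ℤ, F (2 * a, 2 * b) = k * F (a, b)) :
    ∑' p : CP, F (2 * p.1.1, p.1.2) = ∑' p : CP, (if Even p.1.1 then 1 else k) * F p.1 := by
  rw [← sig.tsum_eq (fun p : CP => (if Even p.1.1 then 1 else k) * F p.1)]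
  refine tsum_congr fun p => ?_
  obtain ⟨⟨c, d⟩, hp⟩ := p
  by_cases hd : Even d
  · have hc : ¬ Even c := odd_of_even_right hp hd
    simp only [sig, Equiv.coe_fn_mk]
    rw [dif_pos hd]
    simp only [hc, if_false]
    obtain ⟨e, rfl⟩ := hd
    have h3 : e + e = 2 * e := by ring
    rw [h3, hF]
    have h4 : (2 * e) / 2 = e := by omega
    rw [h4]
  · simp only [sig, Equiv.coe_fn_mk]
    rw [dif_neg hd]
    have h2 : Even (2 * c) := ⟨c, by ring⟩
    simp only [h2, if_true, one_mul]

lemma key₂ (s : ℝ) (τ : ℂ) (k : ℝ) (F : ℤ × ℤ → ℝ)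
    (hF : ∀ a b : ℤ, F (2 * a, 2 * b) = k * F (a, b)) :
    ∑' p : CP, F (p.1.1, 2 * p.1.2) = ∑' p : CP, (if Even p.1.2 then 1 else k) * F p.1 := by
  have h1 := key s τ k (fun q : ℤ × ℤ => F (q.2, q.1)) (fun a b => hF b a)
  calc ∑' p : CP, F (p.1.1, 2 * p.1.2)
      = ∑' p : CP, F ((swp p).1.1, 2 * (swp p).1.2) :=
        (swp.tsum_eq (fun q : CP => F (q.1.1, 2 * q.1.2))).symm
    _ = ∑' p : CP, (if Even p.1.1 then 1 else k) * F (p.1.2, p.1.1) := h1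
    _ = ∑' p : CP, (if Even p.1.2 then 1 else k) * F p.1 := by
        rw [← swp.tsum_eq (fun q : CP => (if Even q.1.2 then 1 else k) * F q.1)]
        rfl

lemma key₃ (s : ℝ) (τ : ℂ) (k : ℝ) (F : ℤ × ℤ → ℝ)
    (hF : ∀ a b : ℤ, F (2 * a, 2 * b) = k * F (a, b)) :
    ∑' p : CP, F (p.1.1, p.1.1 + 2 * p.1.2)
      = ∑' p : CP, (if Even (p.1.2 - p.1.1) then 1 else k) * F p.1 := by
  have hG : ∀ a b : ℤ, (fun q : ℤ × ℤ => F (q.1, q.1 + q.2)) (2 * a, 2 * b)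
      = k * (fun q : ℤ × ℤ => F (q.1, q.1 + q.2)) (a, b) := by
    intro a b
    simp only
    have : 2 * a + 2 * b = 2 * (a + b) := by ring
    rw [this, hF]
  have h1 := key₂ s τ k (fun q : ℤ × ℤ => F (q.1, q.1 + q.2)) hG
  calc ∑' p : CP, F (p.1.1, p.1.1 + 2 * p.1.2)
      = ∑' p : CP, (if Even p.1.2 then 1 else k) * F (p.1.1, p.1.1 + p.1.2) := h1
    _ = ∑' p : CP, (if Even (p.1.2 - p.1.1) then 1 else k) * F p.1 := by
        rw [← shr.tsum_eq (fun q : CP => (if Even (q.1.2 - q.1.1) then 1 else k) * F q.1)]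
        refine tsum_congr fun p => ?_
        obtain ⟨⟨c, d⟩, hp⟩ := p
        simp only [shr, Equiv.coe_fn_mk, add_sub_cancel_left]

lemma wt_sum {k : ℝ} {a b : ℤ} (h : Int.gcd a b = 1) :
    ((if Even a then 1 else k) + (if Even b then 1 else k))
      + (if Even (b - a) then 1 else k) = 1 + 2 * k := by
  rcases Int.even_or_odd a with ha | ha <;> rcases Int.even_or_odd b with hb | hb
  · exact absurd ha (odd_of_even_right h hb)
  · simp [ha, Int.not_even_iff_odd.mpr hb, Int.even_sub]
    ring
  · simp [hb, Int.not_even_iff_odd.mpr ha, Int.even_sub]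
    ring
  · have hab : Even (b - a) := by
      rw [Int.even_sub]
      simp [Int.not_even_iff_odd.mpr ha, Int.not_even_iff_odd.mpr hb]
    simp [hab, Int.not_even_iff_odd.mpr ha, Int.not_even_iff_odd.mpr hb]
    ring
noncomputable def trm (s : ℝ) (τ : ℂ) (p : ℤ × ℤ) : ℝ :=
  τ.im ^ s / (‖(p.1 : ℂ) * τ + (p.2 : ℂ)‖) ^ (2 * s)

lemma trm_nonneg (s : ℝ) {τ : ℂ} (hτ : 0 < τ.im) (p : ℤ × ℤ) : 0 ≤ trm s τ p := by
  unfold trm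
  have : (0:ℝ) ≤ τ.im ^ s := Real.rpow_nonneg hτ.le s
  positivity

lemma trm_doubling (s : ℝ) (τ : ℂ) (a b : ℤ) :
    trm s τ (2 * a, 2 * b) = ((2:ℝ) ^ (2 * s))⁻¹ * trm s τ (a, b) := by
  unfold trm
  have h1 : ((2 * a : ℤ) : ℂ) * τ + ((2 * b : ℤ) : ℂ) = 2 * ((a : ℂ) * τ + (b : ℂ)) := by
    push_cast; ring
  rw [h1, norm_mul, Complex.norm_two,
    Real.mul_rpow (by norm_num) (norm_nonneg _), inv_mul_eq_div, div_div, mul_comm]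

open EisensteinSeries in

lemma summable_trm {s : ℝ} (hs : 1 < s) {τ : ℂ} (hτ : 0 < τ.im) :
    Summable fun p : CP => trm s τ p.1 := by
  have h2s : (2:ℝ) < 2 * s := by linarith
  let z : UpperHalfPlane := ⟨τ, hτ⟩
  have hsum : Summable fun x : Fin 2 → ℤ =>
      τ.im ^ s * (r z ^ (-(2 * s)) * ‖x‖ ^ (-(2 * s))) :=
    ((summable_one_div_norm_rpow h2s).mul_left _).mul_left _
  have hfin : Summable fun x : Fin 2 → ℤ => trm s τ (x 0, x 1) := by
    apply hsum.of_nonneg_of_le (fun x => trm_nonneg _ hτ _)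
    intro x
    unfold trm
    rw [div_eq_mul_inv, ← Real.rpow_neg (norm_nonneg _)]
    refine mul_le_mul_of_nonneg_left ?_ (by positivity)
    exact summand_bound z (by positivity) x
  have h2 : Summable fun p : ℤ × ℤ => trm s τ p :=
    ((finTwoArrowEquiv ℤ).summable_iff (f := fun p : ℤ × ℤ => trm s τ p)).mp (by exact hfin)
  exact h2.subtype _


lemma lin_ne_zero {τ : ℂ} (hτ : 0 < τ.im) {c d : ℤ} (h : ¬(c = 0 ∧ d = 0)) :
    (c : ℂ) * τ + (d : ℂ) ≠ 0 := by
  intro h0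
  have him := congrArg Complex.im h0
  simp only [Complex.add_im, Complex.mul_im, Complex.intCast_im, Complex.intCast_re,
    Complex.zero_im, add_zero, zero_mul, mul_zero] at him
  have hc : c = 0 := by
    have : (c : ℝ) * τ.im = 0 := by linarith
    rcases mul_eq_zero.mp this with h1 | h1
    · exact_mod_cast h1
    · exact absurd h1 hτ.ne'
  have hre := congrArg Complex.re h0
  simp only [Complex.add_re, Complex.mul_re, Complex.intCast_re, Complex.intCast_im,
    Complex.zero_re, hc, Int.cast_zero, zero_mul, mul_zero, zero_add, sub_zero] at hre
  have hd : d = 0 := by exact_mod_cast hre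
  exact h ⟨hc, hd⟩

lemma half_alg (s : ℝ) {y A : ℝ} (hy : 0 ≤ y) (hA : 0 < A) :
    (y / 2) ^ s / (A / 2) ^ (2 * s) = 2 ^ s * (y ^ s / A ^ (2 * s)) := by
  have h2 : (0:ℝ) < 2 := by norm_num
  have hA2 : A ^ (2 * s) ≠ 0 := (Real.rpow_pos_of_pos hA _).ne'
  have h2s : (2:ℝ) ^ s ≠ 0 := (Real.rpow_pos_of_pos h2 _).ne'
  have h22s : (2:ℝ) ^ (2 * s) = 2 ^ s * 2 ^ s := by rw [two_mul, Real.rpow_add h2]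
  rw [Real.div_rpow hy h2.le, Real.div_rpow hA.le h2.le]
  field_simp
  rw [h22s]; ring

lemma eis1 (s : ℝ) {τ : ℂ} (hτ : 0 < τ.im) :
    realEisenstein s (2 * τ) = 1 / 2 * ((2:ℝ) ^ s * ∑' p : CP, trm s τ (2 * p.1.1, p.1.2)) := by
  unfold realEisenstein
  congr 1
  rw [← tsum_mul_left (a := (2:ℝ) ^ s) (f := fun p : CP => trm s τ (2 * p.1.1, p.1.2))]
  refine tsum_congr fun p => ?_
  have him : (2 * τ).im = 2 * τ.im := by simp
  have harg : (p.1.1 : ℂ) * (2 * τ) + (p.1.2 : ℂ)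
      = ((2 * p.1.1 : ℤ) : ℂ) * τ + ((p.1.2 : ℤ) : ℂ) := by push_cast; ring
  rw [him, harg]
  unfold trm
  rw [Real.mul_rpow (by norm_num) hτ.le, mul_div_assoc]

lemma eis2 (s : ℝ) {τ : ℂ} (hτ : 0 < τ.im) :
    realEisenstein s (τ / 2) = 1 / 2 * ((2:ℝ) ^ s * ∑' p : CP, trm s τ (p.1.1, 2 * p.1.2)) := by
  unfold realEisenstein
  congr 1
  rw [← tsum_mul_left (a := (2:ℝ) ^ s) (f := fun p : CP => trm s τ (p.1.1, 2 * p.1.2))]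
  refine tsum_congr fun p => ?_
  obtain ⟨⟨c, d⟩, hp⟩ := p
  have him : (τ / 2).im = τ.im / 2 := by
    rw [Complex.div_im]; simp; ring
  have harg : (c : ℂ) * (τ / 2) + (d : ℂ)
      = (((c : ℤ) : ℂ) * τ + ((2 * d : ℤ) : ℂ)) / 2 := by push_cast; ring
  have hne : ((c : ℤ) : ℂ) * τ + ((2 * d : ℤ) : ℂ) ≠ 0 := by
    refine lin_ne_zero hτ ?_
    rintro ⟨rfl, h2d⟩
    have : d = 0 := by omega
    subst this
    simp [Int.gcd] at hp
  have hA : 0 < ‖((c : ℤ) : ℂ) * τ + ((2 * d : ℤ) : ℂ)‖ :=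
    norm_pos_iff.mpr hne
  simp only
  rw [him, harg, norm_div, Complex.norm_two]
  unfold trm
  exact half_alg s hτ.le hA

lemma eis3 (s : ℝ) {τ : ℂ} (hτ : 0 < τ.im) :
    realEisenstein s ((τ + 1) / 2)
      = 1 / 2 * ((2:ℝ) ^ s * ∑' p : CP, trm s τ (p.1.1, p.1.1 + 2 * p.1.2)) := by
  unfold realEisenstein
  congr 1
  rw [← tsum_mul_left (a := (2:ℝ) ^ s) (f := fun p : CP => trm s τ (p.1.1, p.1.1 + 2 * p.1.2))]
  refine tsum_congr fun p => ?_
  obtain ⟨⟨c, d⟩, hp⟩ := p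
  have him : ((τ + 1) / 2).im = τ.im / 2 := by
    rw [Complex.div_im]; simp; ring
  have harg : (c : ℂ) * ((τ + 1) / 2) + (d : ℂ)
      = (((c : ℤ) : ℂ) * τ + ((c + 2 * d : ℤ) : ℂ)) / 2 := by push_cast; ring
  have hne : ((c : ℤ) : ℂ) * τ + ((c + 2 * d : ℤ) : ℂ) ≠ 0 := by
    refine lin_ne_zero hτ ?_
    rintro ⟨rfl, h2d⟩
    have : d = 0 := by omega
    subst this
    simp [Int.gcd] at hp
  have hA : 0 < ‖((c : ℤ) : ℂ) * τ + ((c + 2 * d : ℤ) : ℂ)‖ :=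
    norm_pos_iff.mpr hne
  simp only
  rw [him, harg, norm_div, Complex.norm_two]
  unfold trm
  exact half_alg s hτ.le hA

lemma summable_wt {s : ℝ} (hs : 1 < s) {τ : ℂ} (hτ : 0 < τ.im) {k : ℝ} (hk0 : 0 ≤ k)
    (hk1 : k ≤ 1) (w : CP → Prop) [DecidablePred w] :
    Summable fun p : CP => (if w p then 1 else k) * trm s τ p.1 := by
  refine (summable_trm hs hτ).of_nonneg_of_le (fun p => ?_) (fun p => ?_)
  · have h := trm_nonneg s hτ p.1
    split <;> [simpa; positivity]
  · have h := trm_nonneg s hτ p.1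
    split
    · simp
    · exact mul_le_of_le_one_left h hk1


end RealEisAux

open RealEisAux in
/-- Hecke eigenfunction identity for `T₂`:
`E_s(2τ) + E_s(τ/2) + E_s((τ+1)/2) = ((1 + 2^{2s-1})/2^{s-1}) E_s(τ)`. -/
theorem realEisenstein_hecke_T2 (s : ℝ) (hs : 1 < s) (τ : ℂ) (hτ : 0 < τ.im) :
    realEisenstein s (2 * τ) + realEisenstein s (τ / 2) + realEisenstein s ((τ + 1) / 2)
      = ((1 + 2 ^ (2 * s - 1)) / 2 ^ (s - 1)) * realEisenstein s τ := by
  classical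
  have h2 : (0:ℝ) < 2 := by norm_num
  set k : ℝ := ((2:ℝ) ^ (2 * s))⁻¹ with hkdef
  have hk0 : 0 ≤ k := by positivity
  have hk1 : k ≤ 1 := inv_le_one_of_one_le₀ (Real.one_le_rpow (by norm_num) (by positivity))
  have hdb : ∀ a b : ℤ, trm s τ (2 * a, 2 * b) = k * trm s τ (a, b) := trm_doubling s τ
  rw [eis1 s hτ, eis2 s hτ, eis3 s hτ, key s τ k _ hdb, key₂ s τ k _ hdb, key₃ s τ k _ hdb]
  have hw1 : Summable (fun p : CP => (if Even p.1.1 then 1 else k) * trm s τ p.1) :=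
    summable_wt hs hτ hk0 hk1 (fun p : CP => Even p.1.1)
  have hw2 : Summable (fun p : CP => (if Even p.1.2 then 1 else k) * trm s τ p.1) :=
    summable_wt hs hτ hk0 hk1 (fun p : CP => Even p.1.2)
  have hw3 : Summable (fun p : CP => (if Even (p.1.2 - p.1.1) then 1 else k) * trm s τ p.1) :=
    summable_wt hs hτ hk0 hk1 (fun p : CP => Even (p.1.2 - p.1.1))
  have hadd : (∑' p : CP, (if Even p.1.1 then 1 else k) * trm s τ p.1)
      + (∑' p : CP, (if Even p.1.2 then 1 else k) * trm s τ p.1)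
      + (∑' p : CP, (if Even (p.1.2 - p.1.1) then 1 else k) * trm s τ p.1)
      = (1 + 2 * k) * ∑' p : CP, trm s τ p.1 := by
    rw [← Summable.tsum_add hw1 hw2, ← Summable.tsum_add (hw1.add hw2) hw3,
      ← tsum_mul_left (a := 1 + 2 * k) (f := fun p : CP => trm s τ p.1)]
    refine tsum_congr fun p => ?_
    rw [← add_mul, ← add_mul, wt_sum p.2]
  have hτE : realEisenstein s τ = 1 / 2 * ∑' p : CP, trm s τ p.1 := rfl
  have hsplit : ∀ A B C : ℝ, 1/2*((2:ℝ)^s*A) + 1/2*(2^s*B) + 1/2*(2^s*C)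
      = 1/2*2^s*(A+B+C) := by intros; ring
  rw [hτE, hsplit, hadd]
  have e1 : (2:ℝ)^(2*s) = 2^s*2^s := by rw [two_mul, Real.rpow_add h2]
  have e2 : (2:ℝ)^(2*s-1) = 2^s*2^s/2 := by rw [Real.rpow_sub h2, Real.rpow_one, e1]
  have e3 : (2:ℝ)^(s-1) = 2^s/2 := by rw [Real.rpow_sub h2, Real.rpow_one]
  have h2s : (2:ℝ)^s ≠ 0 := (Real.rpow_pos_of_pos h2 s).ne'
  rw [hkdef, e1, e2, e3]
  field_simp
  ring
end
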